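/- arXiv:1504.06260 — 2 statements merged into one kernel-verified Lean document; each statement's English description precedes it below -/
import Mathlib

section
/- For every n ≥ 2, every integer 0 ≤ i ≤ n, and every integer k ≥ 1 with i + k + 1 ≤ n, the probability of increasing the number of ones by k under standard bit mutation is at least twice the probability of increasing it by k+1: mut(i, i+k) ≥ 2·mut(i, i+k+1). -/
/-!
Group the outcomes by the number `a` of 1-bits that flip. For fixed `a`, raising the number of
0-bits that flip from `d` to `d + 1` multiplies the probability by
`(n - i - d) / (d + 1) · (1/n) / (1 - 1/n) = (n - i - d) / ((d + 1) (n - 1))`,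
which is at most `1/2` because `d ≥ k ≥ 1` and `n - i - d ≤ n - 1`.
So the inequality already holds term by term.
-/

/-- `mutProb n i j` is the probability that standard bit mutation with rate `1/n`
(each of the `n` bits flips independently with probability `1/n`), applied to a bit
string of length `n` with exactly `i` ones, produces a string with exactly `j` ones.
The sum runs over the number `a` of 1-bits that flip to 0; then `j + a - i` 0-bits
must flip to 1 (a term is zero unless `i ≤ j + a`). -/
noncomputable def mutProb (n i j : ℕ) : ℝ :=
  ∑ a ∈ Finset.range (n + 1),
    if i ≤ j + a then
      (Nat.choose i a : ℝ) * (Nat.choose (n - i) (j + a - i)) *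
        (1 / n) ^ (a + (j + a - i)) * (1 - 1 / n) ^ (n - (a + (j + a - i)))
    else 0

open Finset

noncomputable def bitFlipProb (n s : ℕ) : ℝ :=
  (1 / n) ^ s * (1 - 1 / n) ^ (n - s)

lemma bitFlipProb_nonneg (n s : ℕ) : 0 ≤ bitFlipProb n s := by
  have : (1 : ℝ) / n ≤ 1 := by simpa only [one_div] using Nat.cast_inv_le_one n
  unfold bitFlipProb
  exact mul_nonneg (by positivity) (pow_nonneg (by linarith) _)

lemma bitFlipProb_succ_mul {n s : ℕ} (hs : s + 1 ≤ n) :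
    bitFlipProb n (s + 1) * ((n : ℝ) - 1) = bitFlipProb n s := by
  have hn : (n : ℝ) ≠ 0 := by exact_mod_cast (by omega : n ≠ 0)
  have hexp : n - s = n - (s + 1) + 1 := by omega
  unfold bitFlipProb
  rw [hexp, pow_succ, pow_succ]
  field_simp

lemma mutProb_add (n i j : ℕ) :
    mutProb n i (i + j) = ∑ a ∈ range (n + 1),
      (i.choose a : ℝ) * (n - i).choose (j + a) * bitFlipProb n (a + (j + a)) := by
  refine sum_congr rfl fun a _ => ?_
  have hsub : i + j + a - i = j + a := by omega
  rw [if_pos (by omega), hsub, bitFlipProb, mul_assoc]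

lemma two_mul_choose_succ_le {m n d : ℕ} (hd : 1 ≤ d) (hm : m ≤ n) :
    2 * m.choose (d + 1) ≤ m.choose d * (n - 1) :=
  calc 2 * m.choose (d + 1)
      ≤ m.choose (d + 1) * (d + 1) := by rw [mul_comm]; gcongr; omega
    _ = m.choose d * (m - d) := m.choose_succ_right_eq d
    _ ≤ m.choose d * (n - 1) := by gcongr

lemma choose_mul_choose_sub_eq_zero {n i a b : ℕ} (h : n < a + b + 1) :
    i.choose a * (n - i).choose (b + 1) = 0 := by
  rcases lt_or_ge i a with hia | hai
  · rw [Nat.choose_eq_zero_of_lt hia, zero_mul]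
  · rw [Nat.choose_eq_zero_of_lt (by omega : n - i < b + 1), mul_zero]

lemma two_mul_choose_mul_bitFlipProb_le {n i a d : ℕ} (hd : 1 ≤ d) :
    2 * ((i.choose a : ℝ) * (n - i).choose (d + 1) * bitFlipProb n (a + (d + 1))) ≤
      (i.choose a : ℝ) * (n - i).choose d * bitFlipProb n (a + d) := by
  by_cases hs : a + d + 1 ≤ n
  · have hchoose : (2 : ℝ) * (n - i).choose (d + 1) ≤ (n - i).choose d * ((n : ℝ) - 1) := by
      rw [← Nat.cast_pred (by omega)]
      exact_mod_cast two_mul_choose_succ_le hd (Nat.sub_le n i)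
    calc 2 * ((i.choose a : ℝ) * (n - i).choose (d + 1) * bitFlipProb n (a + (d + 1)))
        = i.choose a * (2 * (n - i).choose (d + 1)) * bitFlipProb n (a + d + 1) := by
          rw [← add_assoc]; ring
      _ ≤ i.choose a * ((n - i).choose d * ((n : ℝ) - 1)) * bitFlipProb n (a + d + 1) := by
          gcongr
          exact bitFlipProb_nonneg n _
      _ = i.choose a * (n - i).choose d * (bitFlipProb n (a + d + 1) * ((n : ℝ) - 1)) := by ring
      _ = i.choose a * (n - i).choose d * bitFlipProb n (a + d) := by
          rw [bitFlipProb_succ_mul hs]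
  · have hzero : (i.choose a : ℝ) * (n - i).choose (d + 1) = 0 := by
      exact_mod_cast choose_mul_choose_sub_eq_zero (by omega)
    rw [hzero, zero_mul, mul_zero]
    exact mul_nonneg (by positivity) (bitFlipProb_nonneg n _)

theorem mut_increase_halving_general (n i k : ℕ) (hk : 1 ≤ k) :
    2 * mutProb n i (i + k + 1) ≤ mutProb n i (i + k) := by
  rw [add_assoc, mutProb_add, mutProb_add, mul_sum]
  refine sum_le_sum fun a _ => ?_
  rw [add_right_comm k 1 a]
  exact two_mul_choose_mul_bitFlipProb_le (by omega)

theorem mut_increase_halving (n i k : ℕ) (hn : 2 ≤ n) (hk : 1 ≤ k)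
    (h : i + k + 1 ≤ n) :
    2 * mutProb n i (i + k + 1) ≤ mutProb n i (i + k) :=
  mut_increase_halving_general n i k hk
end

section
/- For every n ≥ 2, every β > 0, every positive integer N, and every integer 0 ≤ i ≤ n−1, the forward drift of SSWM with global mutations on OneMax satisfies Δ⁺(i) = ∑_{j=1}^{n−i} mut(i, i+j)·j·p_fix(j) ≥ ((n−i)/n)·(1 − 1/n)^{n−1}·p_fix(1), and the backward drift satisfies |Δ⁻(i)| = ∑_{j=1}^{i} mut(i, i−j)·j·p_fix(−j) ≤ 1.14·(1 − 1/n)^{n−1}·(p_fix(−1) + e·p_fix(−2)). -/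
/-- The fixation probability for selection strength `β` and population size `N`:
`p_fix(Δf) = (1 − e^{−2βΔf})/(1 − e^{−2NβΔf})` for `Δf ≠ 0`, and `p_fix(0) := 1/N`. -/
noncomputable def pfix (β N Δf : ℝ) : ℝ :=
  if Δf = 0 then 1 / N
  else (1 - Real.exp (-2 * β * Δf)) / (1 - Real.exp (-2 * N * β * Δf))

/-! The forward drift is at least its `j = 1` term, which is at least the probability that
mutation flips exactly one 0-bit and nothing else.

A mutation losing `j` ones flips `j + b` ones and `b` zeros for some `b`. Compared with `b = 0`,
each extra pair of flips costs a factor at most `y = (i - j)(n - i)/(n - 1)^2 ≤ 1/4` (AM-GM), so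
`mut(i, i - j) ≤ C(i, j) n^{-j} (1 - 1/n)^{n-j} / (1 - y)`. For `j = 1` this is at most
`(1 - 1/n)^{n-1}`; for `j ≥ 2` it gives `j · mut(i, i - j) ≤ (4/3) (1 - 1/n)^{n-1} / (j - 1)!`,
while `p_fix(-j) ≤ p_fix(-2)` because `p_fix(-x) = 1 / ∑_{k<N} e^{2βxk}`. Summing `1/(j - 1)!`
against `e - 1`, the backward drift is at most
`(1 - 1/n)^{n-1} (p_fix(-1) + (4/3)(e - 1) p_fix(-2))`, and `(4/3)(e - 1) ≤ 1.14 e`. -/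

open Finset Real
open scoped Nat

lemma pfix_nonneg (β x : ℝ) {N : ℝ} (hN : 0 ≤ N) : 0 ≤ pfix β N x := by
  unfold pfix
  split_ifs
  · positivity
  rw [div_nonneg_iff]
  rcases le_total 0 (β * x) with h | h
  · left
    constructor <;> simp only [sub_nonneg, exp_le_one_iff] <;> nlinarith [mul_nonneg hN h]
  · right
    constructor <;> simp only [sub_nonpos, one_le_exp_iff] <;>
      nlinarith [mul_nonneg hN (neg_nonneg.2 h)]

lemma pfix_neg_eq_inv_geom_sum {β x : ℝ} (hβx : β * x ≠ 0) (N : ℕ) :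
    pfix β N (-x) = (∑ k ∈ range N, exp (2 * β * x) ^ k)⁻¹ := by
  have hx : -x ≠ 0 := by simp [right_ne_zero_of_mul hβx]
  have hr : 1 - exp (2 * β * x) ≠ 0 := by
    rw [sub_ne_zero, ne_comm, Ne, exp_eq_one_iff]
    simpa using hβx
  rw [pfix, if_neg hx, show -2 * (N : ℝ) * β * -x = N * (2 * β * x) by ring, exp_nat_mul,
    ← mul_neg_geom_sum, show -2 * β * -x = 2 * β * x by ring, div_mul_cancel_left₀ hr]

lemma pfix_neg_le_pfix_neg {β x y : ℝ} (hβ : 0 < β) (hx : 0 < x) (hxy : x ≤ y) (N : ℕ) :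
    pfix β N (-y) ≤ pfix β N (-x) := by
  rw [pfix_neg_eq_inv_geom_sum (mul_pos hβ hx).ne',
    pfix_neg_eq_inv_geom_sum (mul_pos hβ (hx.trans_le hxy)).ne']
  rcases N.eq_zero_or_pos with rfl | hN
  · simp
  refine inv_anti₀ (sum_pos (fun k _ ↦ by positivity) (nonempty_range_iff.2 hN.ne')) ?_
  gcongr

lemma one_sub_one_div_nonneg (n : ℕ) : (0 : ℝ) ≤ 1 - 1 / n := by
  rcases n.eq_zero_or_pos with rfl | hn
  · simp
  · exact sub_nonneg.2 (div_le_one_of_le₀ (by exact_mod_cast hn) n.cast_nonneg)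

lemma mutProb_nonneg (n i j : ℕ) : 0 ≤ mutProb n i j := by
  have := one_sub_one_div_nonneg n
  exact sum_nonneg fun a _ ↦ by split_ifs <;> positivity

lemma mutProb_add_one_ge {n i : ℕ} (hi : i ≤ n) :
    ((n : ℝ) - i) / n * (1 - 1 / n) ^ (n - 1) ≤ mutProb n i (i + 1) := by
  have := one_sub_one_div_nonneg n
  refine le_trans (le_of_eq ?_)
    (single_le_sum (fun a _ ↦ by split_ifs <;> positivity) (mem_range.2 n.succ_pos))
  rw [if_pos (by omega), show i + 1 + 0 - i = 1 by omega]
  simp only [Nat.choose_zero_right, Nat.choose_one_right, zero_add, pow_one, Nat.cast_sub hi]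
  ring

lemma mutProb_sub_eq {n i j : ℕ} (hj : j ≤ i) :
    mutProb n i (i - j) = ∑ b ∈ range (n + 1 - j),
      (i.choose (j + b) : ℝ) * (n - i).choose b * (1 / n) ^ (j + 2 * b) *
        (1 - 1 / n) ^ (n - (j + 2 * b)) := by
  have hfilter : (range (n + 1)).filter (fun a ↦ i ≤ i - j + a) = Ico j (n + 1) := by
    ext a
    simp only [mem_filter, mem_range, mem_Ico]
    omega
  rw [mutProb, ← sum_filter, hfilter, sum_Ico_eq_sum_range]
  refine sum_congr rfl fun b _ ↦ ?_
  rw [show i - j + (j + b) - i = b by omega, show j + b + b = j + 2 * b by ring]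

lemma choose_add_mul_choose_le (i m j b : ℕ) :
    i.choose (j + b) * m.choose b ≤ i.choose j * ((i - j) * m) ^ b :=
  calc i.choose (j + b) * m.choose b ≤ i.choose (j + b) * (j + b).choose j * m.choose b := by
        gcongr
        exact Nat.le_mul_of_pos_right _ (Nat.choose_pos (Nat.le_add_right j b))
    _ = i.choose j * ((i - j).choose b * m.choose b) := by
        rw [Nat.choose_mul (Nat.le_add_right j b), Nat.add_sub_cancel_left, mul_assoc]
    _ ≤ i.choose j * ((i - j) * m) ^ b := by
        rw [mul_pow]
        gcongr <;> exact Nat.choose_le_pow _ _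

/-- Bound on the factor by which flipping one more 1-bit and one more 0-bit changes the
probability of a mutation that loses `j` of `i` ones. -/
noncomputable def pairFlipRatio (n i j : ℕ) : ℝ :=
  ((i : ℝ) - j) * (n - i) / ((n : ℝ) - 1) ^ 2

lemma pairFlipRatio_nonneg {n i j : ℕ} (hji : j ≤ i) (hi : i ≤ n) :
    0 ≤ pairFlipRatio n i j := by
  have : (j : ℝ) ≤ i := by exact_mod_cast hji
  have : (i : ℝ) ≤ n := by exact_mod_cast hi
  unfold pairFlipRatio
  apply div_nonneg <;> nlinarith

lemma pairFlipRatio_le_quarter {n i j : ℕ} (hj : 1 ≤ j) (hji : j ≤ i) (hi : i < n) :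
    pairFlipRatio n i j ≤ 1 / 4 := by
  have : (1 : ℝ) ≤ j := by exact_mod_cast hj
  have : (j : ℝ) ≤ i := by exact_mod_cast hji
  have : (i : ℝ) + 1 ≤ n := by exact_mod_cast hi
  unfold pairFlipRatio
  rw [div_le_iff₀ (by nlinarith)]
  -- AM-GM: `4 (i - j) (n - i) ≤ (n - j)^2 ≤ (n - 1)^2`
  nlinarith [sq_nonneg ((i : ℝ) - j - (n - i)), mul_le_mul (by linarith : (n : ℝ) - j ≤ n - 1)
    (by linarith : (n : ℝ) - j ≤ n - 1) (by linarith) (by linarith)]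

lemma choose_mul_choose_mul_pow_le {n i j : ℕ} (hn : 1 < n) (hji : j ≤ i) (hi : i ≤ n)
    (b : ℕ) :
    (i.choose (j + b) : ℝ) * (n - i).choose b * (1 / n) ^ (j + 2 * b) *
        (1 - 1 / n) ^ (n - (j + 2 * b)) ≤
      i.choose j * (1 / n) ^ j * (1 - 1 / n) ^ (n - j) * pairFlipRatio n i j ^ b := by
  have hp := one_sub_one_div_nonneg n
  have hy := pairFlipRatio_nonneg hji hi
  by_cases hb : n < j + 2 * b
  · have : i.choose (j + b) * (n - i).choose b = 0 := by
      rcases lt_or_ge i (j + b) with h | h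
      · rw [Nat.choose_eq_zero_of_lt h, zero_mul]
      · rw [Nat.choose_eq_zero_of_lt (by omega : n - i < b), mul_zero]
    rw [← Nat.cast_mul, this, Nat.cast_zero, zero_mul, zero_mul]
    positivity
  have hn1 : (n : ℝ) - 1 ≠ 0 := sub_ne_zero.2 (by exact_mod_cast hn.ne')
  -- each extra pair of flipped bits trades `(1 - 1/n)^2` for `(1/n)^2 = (1 - 1/n)^2 / (n-1)^2`
  have hsplit : (1 / (n : ℝ)) ^ (j + 2 * b) * (1 - 1 / n) ^ (n - (j + 2 * b)) =
      (1 / n) ^ j * (1 - 1 / n) ^ (n - j) / (((n : ℝ) - 1) ^ 2) ^ b := by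
    have hq : 1 - 1 / (n : ℝ) = ((n : ℝ) - 1) * (1 / n) := by
      field_simp
    rw [eq_div_iff (pow_ne_zero _ (pow_ne_zero _ hn1)),
      show n - j = 2 * b + (n - (j + 2 * b)) by omega, hq]
    generalize n - (j + 2 * b) = m
    generalize 1 / (n : ℝ) = q
    generalize (n : ℝ) - 1 = r
    ring
  have hcast : (((i - j) * (n - i) : ℕ) : ℝ) = ((i : ℝ) - j) * (n - i) := by
    push_cast [Nat.cast_sub hji, Nat.cast_sub hi]
    ring
  calc (i.choose (j + b) : ℝ) * (n - i).choose b * (1 / n) ^ (j + 2 * b) *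
        (1 - 1 / n) ^ (n - (j + 2 * b))
      = ((i.choose (j + b) * (n - i).choose b : ℕ) : ℝ) *
          ((1 / n) ^ (j + 2 * b) * (1 - 1 / n) ^ (n - (j + 2 * b))) := by push_cast; ring
    _ ≤ ((i.choose j * ((i - j) * (n - i)) ^ b : ℕ) : ℝ) *
          ((1 / n) ^ (j + 2 * b) * (1 - 1 / n) ^ (n - (j + 2 * b))) := by
        refine mul_le_mul_of_nonneg_right ?_ (by positivity)
        exact_mod_cast choose_add_mul_choose_le _ _ _ _
    _ = i.choose j * (1 / n) ^ j * (1 - 1 / n) ^ (n - j) * pairFlipRatio n i j ^ b := by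
        rw [hsplit, pairFlipRatio, div_pow _ (((n : ℝ) - 1) ^ 2), Nat.cast_mul, Nat.cast_pow,
          hcast]
        ring

lemma mutProb_sub_le {n i j : ℕ} (hj : 1 ≤ j) (hji : j ≤ i) (hi : i < n) :
    mutProb n i (i - j) ≤
      i.choose j * (1 / n) ^ j * (1 - 1 / n) ^ (n - j) / (1 - pairFlipRatio n i j) := by
  have hy := pairFlipRatio_nonneg hji hi.le
  have hy4 := pairFlipRatio_le_quarter hj hji hi
  have hp := one_sub_one_div_nonneg n
  rw [mutProb_sub_eq hji]
  calc _ ≤ ∑ b ∈ range (n + 1 - j),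
          i.choose j * (1 / n) ^ j * (1 - 1 / n) ^ (n - j) * pairFlipRatio n i j ^ b :=
        sum_le_sum fun b _ ↦ choose_mul_choose_mul_pow_le (by omega) hji hi.le b
    _ = i.choose j * (1 / n) ^ j * (1 - 1 / n) ^ (n - j) *
          ∑ b ∈ Ico 0 (n + 1 - j), pairFlipRatio n i j ^ b := by rw [mul_sum, range_eq_Ico]
    _ ≤ _ := by
        refine (mul_le_mul_of_nonneg_left ?_ (by positivity)).trans_eq (mul_one_div _ _)
        simpa using geom_sum_Ico_le_of_lt_one hy (by linarith) (m := 0) (n := n + 1 - j)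

lemma mutProb_pred_le {n i : ℕ} (hi₀ : 1 ≤ i) (hi : i < n) :
    mutProb n i (i - 1) ≤ (1 - 1 / n) ^ (n - 1) := by
  have hy4 := pairFlipRatio_le_quarter le_rfl hi₀ hi
  have hp := pow_nonneg (one_sub_one_div_nonneg n) (n - 1)
  have hi' : (1 : ℝ) ≤ i := by exact_mod_cast hi₀
  have hn : (i : ℝ) + 1 ≤ n := by exact_mod_cast hi
  -- `n ((n - 1)^2 - (i - 1)(n - i)) - i (n - 1)^2 = (n - i) (n (n - 1 - i) + 1) ≥ 0`
  have hkey : (i : ℝ) / n ≤ 1 - pairFlipRatio n i 1 := by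
    rw [pairFlipRatio, Nat.cast_one, div_le_iff₀ (by linarith), sub_mul, div_mul_eq_mul_div,
      le_sub_iff_add_le, ← le_sub_iff_add_le', div_le_iff₀ (by nlinarith)]
    nlinarith [mul_nonneg (by linarith : (0 : ℝ) ≤ n - i)
      (by linarith : (0 : ℝ) ≤ n - 1 - i)]
  calc mutProb n i (i - 1)
      ≤ i.choose 1 * (1 / n) ^ 1 * (1 - 1 / n) ^ (n - 1) / (1 - pairFlipRatio n i 1) :=
        mutProb_sub_le le_rfl hi₀ hi
    _ = (i / n) / (1 - pairFlipRatio n i 1) * (1 - 1 / n) ^ (n - 1) := by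
        rw [Nat.choose_one_right]
        ring
    _ ≤ (1 - 1 / n) ^ (n - 1) :=
        mul_le_of_le_one_left hp (div_le_one_of_le₀ hkey (by linarith))

lemma choose_mul_pow_mul_le {n i j : ℕ} (hj : 1 ≤ j) (hji : j ≤ i) (hi : i < n) :
    (i.choose j : ℝ) * (1 / n) ^ j * (1 - 1 / n) ^ (n - j) * j ≤
      (1 - 1 / n) ^ (n - 1) / (j - 1)! := by
  obtain ⟨k, rfl⟩ : ∃ k, j = k + 1 := ⟨j - 1, by omega⟩
  have hp := one_sub_one_div_nonneg n
  have hn : (i : ℝ) ≤ n - 1 := by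
    rw [le_sub_iff_add_le]
    exact_mod_cast hi
  have hq : ((n : ℝ) - 1) * (1 / n) = 1 - 1 / n := by
    have : (n : ℝ) ≠ 0 := by exact_mod_cast (by omega : n ≠ 0)
    field_simp
  have hfact : ((k + 1 : ℕ) : ℝ) / (k + 1)! = 1 / k ! := by
    rw [Nat.factorial_succ, Nat.cast_mul, ← div_div, div_self (by positivity)]
  calc (i.choose (k + 1) : ℝ) * (1 / n) ^ (k + 1) * (1 - 1 / n) ^ (n - (k + 1)) * (k + 1 : ℕ)
      ≤ (n - 1) ^ (k + 1) / (k + 1)! * (1 / n) ^ (k + 1) * (1 - 1 / n) ^ (n - (k + 1)) *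
          (k + 1 : ℕ) := by
        gcongr
        exact (Nat.choose_le_pow_div _ _).trans (by gcongr)
    _ = ((n - 1) * (1 / n)) ^ (k + 1) * (1 - 1 / n) ^ (n - (k + 1)) *
          (((k + 1 : ℕ) : ℝ) / (k + 1)!) := by
        rw [mul_pow]
        ring
    _ ≤ (1 - 1 / n) ^ k * (1 - 1 / n) ^ (n - (k + 1)) * (((k + 1 : ℕ) : ℝ) / (k + 1)!) := by
        rw [hq]
        gcongr ?_ * _ * _
        exact pow_le_pow_of_le_one hp (by simp) k.le_succ
    _ = (1 - 1 / n) ^ (n - 1) / (k + 1 - 1)! := by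
        rw [hfact, ← pow_add, show k + (n - (k + 1)) = n - 1 by omega, Nat.add_sub_cancel]
        ring

lemma mutProb_sub_mul_le {n i j : ℕ} (hj : 1 ≤ j) (hji : j ≤ i) (hi : i < n) :
    mutProb n i (i - j) * j ≤ 4 / 3 * ((1 - 1 / n) ^ (n - 1) / (j - 1)!) := by
  have hy4 := pairFlipRatio_le_quarter hj hji hi
  have hp := one_sub_one_div_nonneg n
  have hgeom : 1 / (1 - pairFlipRatio n i j) ≤ 4 / 3 := by
    rw [div_le_iff₀ (by linarith)]
    linarith
  calc mutProb n i (i - j) * j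
      ≤ i.choose j * (1 / n) ^ j * (1 - 1 / n) ^ (n - j) / (1 - pairFlipRatio n i j) * j := by
        gcongr
        exact mutProb_sub_le hj hji hi
    _ = 1 / (1 - pairFlipRatio n i j) *
          (i.choose j * (1 / n) ^ j * (1 - 1 / n) ^ (n - j) * j) := by
        ring
    _ ≤ 4 / 3 * ((1 - 1 / n) ^ (n - 1) / (j - 1)!) := by
        gcongr
        exact choose_mul_pow_mul_le hj hji hi

lemma sum_Icc_one_eq_add_sum_range {M : Type*} [AddCommMonoid M] (f : ℕ → M) (m : ℕ) :
    ∑ j ∈ Icc 1 (m + 1), f j = f 1 + ∑ k ∈ range m, f (k + 2) := by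
  rw [range_eq_Ico, sum_Ico_add' f 0 m 2, ← Ico_add_one_right_eq_Icc,
    sum_eq_sum_Ico_succ_bot (by omega)]
  rfl

lemma sum_range_one_div_factorial_succ_le (m : ℕ) :
    ∑ k ∈ range m, (1 : ℝ) / (k + 1)! ≤ exp 1 - 1 := by
  have := sum_le_exp_of_nonneg zero_le_one (m + 1)
  simp only [sum_range_succ', one_pow, Nat.factorial_zero, Nat.cast_one, div_one] at this
  linarith

noncomputable def forwardDrift (n : ℕ) (β : ℝ) (N i : ℕ) : ℝ :=
  ∑ j ∈ Icc 1 (n - i), mutProb n i (i + j) * (j : ℝ) * pfix β N (j : ℝ)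

/-- The magnitude `|Δ⁻(i)|` of the backward drift. -/
noncomputable def backwardDrift (n : ℕ) (β : ℝ) (N i : ℕ) : ℝ :=
  ∑ j ∈ Icc 1 i, mutProb n i (i - j) * (j : ℝ) * pfix β N (-(j : ℝ))

lemma forwardDrift_ge (β : ℝ) (N : ℕ) {n i : ℕ} (hi : i < n) :
    ((n : ℝ) - i) / n * (1 - 1 / n) ^ (n - 1) * pfix β N 1 ≤ forwardDrift n β N i := by
  have hterm (j : ℕ) (_ : j ∈ Icc 1 (n - i)) : 0 ≤ mutProb n i (i + j) * j * pfix β N j :=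
    mul_nonneg (mul_nonneg (mutProb_nonneg _ _ _) j.cast_nonneg) (pfix_nonneg _ _ N.cast_nonneg)
  calc ((n : ℝ) - i) / n * (1 - 1 / n) ^ (n - 1) * pfix β N 1
      ≤ mutProb n i (i + 1) * (1 : ℕ) * pfix β N (1 : ℕ) := by
        rw [Nat.cast_one, mul_one]
        exact mul_le_mul_of_nonneg_right (mutProb_add_one_ge hi.le) (pfix_nonneg _ _ N.cast_nonneg)
    _ ≤ forwardDrift n β N i := single_le_sum hterm (mem_Icc.2 ⟨le_rfl, by omega⟩)

lemma backwardDrift_le {β : ℝ} (hβ : 0 < β) (N : ℕ) {n i : ℕ} (hi : i < n) :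
    backwardDrift n β N i ≤
      1.14 * (1 - 1 / n) ^ (n - 1) * (pfix β N (-1) + exp 1 * pfix β N (-2)) := by
  set p := (1 - 1 / (n : ℝ)) ^ (n - 1)
  have hp : 0 ≤ p := pow_nonneg (one_sub_one_div_nonneg n) _
  have hpfix₁ := pfix_nonneg β (-1) N.cast_nonneg
  have hpfix₂ := pfix_nonneg β (-2) N.cast_nonneg
  rcases i with _ | m
  · simp only [backwardDrift, Icc_eq_empty_of_lt zero_lt_one, sum_empty]
    positivity
  have hhead : mutProb n (m + 1) (m + 1 - 1) * (1 : ℕ) * pfix β N (-(1 : ℕ)) ≤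
      p * pfix β N (-1) := by
    rw [Nat.cast_one, mul_one]
    exact mul_le_mul_of_nonneg_right (mutProb_pred_le le_add_self hi) hpfix₁
  have htail (k : ℕ) (hk : k ∈ range m) :
      mutProb n (m + 1) (m + 1 - (k + 2)) * (k + 2 : ℕ) * pfix β N (-(k + 2 : ℕ)) ≤
        4 / 3 * p * pfix β N (-2) * (1 / (k + 1)!) := by
    have hk2 : (2 : ℝ) ≤ (k + 2 : ℕ) := by push_cast; linarith [k.cast_nonneg (α := ℝ)]
    calc mutProb n (m + 1) (m + 1 - (k + 2)) * (k + 2 : ℕ) * pfix β N (-(k + 2 : ℕ))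
        ≤ 4 / 3 * (p / (k + 2 - 1)!) * pfix β N (-2) :=
          mul_le_mul (mutProb_sub_mul_le (by omega) (by simp at hk; omega) hi)
            (pfix_neg_le_pfix_neg hβ two_pos hk2 N) (pfix_nonneg _ _ N.cast_nonneg) (by positivity)
      _ = 4 / 3 * p * pfix β N (-2) * (1 / (k + 1)!) := by
          rw [show k + 2 - 1 = k + 1 by omega]
          ring
  calc backwardDrift n β N (m + 1)
      = mutProb n (m + 1) (m + 1 - 1) * (1 : ℕ) * pfix β N (-(1 : ℕ)) +
          ∑ k ∈ range m, mutProb n (m + 1) (m + 1 - (k + 2)) * (k + 2 : ℕ) *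
            pfix β N (-(k + 2 : ℕ)) := by
        rw [backwardDrift, sum_Icc_one_eq_add_sum_range]
    _ ≤ p * pfix β N (-1) + 4 / 3 * p * pfix β N (-2) * (exp 1 - 1) := by
        gcongr
        refine (sum_le_sum htail).trans ?_
        rw [← mul_sum]
        gcongr
        exact sum_range_one_div_factorial_succ_le m
    _ ≤ 1.14 * p * (pfix β N (-1) + exp 1 * pfix β N (-2)) := by
        nlinarith [exp_one_lt_three, mul_nonneg hp hpfix₁, mul_nonneg hp hpfix₂]

theorem sswm_onemax_global_drift_bounds_general (n : ℕ) (hn : 2 ≤ n) (β : ℝ) (hβ : 0 < β)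
    (N : ℕ) (i : ℕ) (hi : i ≤ n - 1) :
    (((n : ℝ) - i) / n) * (1 - 1 / n) ^ (n - 1) * pfix β N 1 ≤
        (∑ j ∈ Finset.Icc 1 (n - i), mutProb n i (i + j) * (j : ℝ) * pfix β N (j : ℝ)) ∧
    (∑ j ∈ Finset.Icc 1 i, mutProb n i (i - j) * (j : ℝ) * pfix β N (-(j : ℝ))) ≤
        1.14 * (1 - 1 / n) ^ (n - 1) * (pfix β N (-1) + Real.exp 1 * pfix β N (-2)) :=
  ⟨forwardDrift_ge β N (by omega), backwardDrift_le hβ N (by omega)⟩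

/-- Forward drift of SSWM with global mutations on OneMax at a point with `i` ones:
`Δ⁺(i) = ∑_{j=1}^{n−i} mutProb(i, i+j)·j·p_fix(j)`, and magnitude of the backward drift:
`|Δ⁻(i)| = ∑_{j=1}^{i} mutProb(i, i−j)·j·p_fix(−j)`. -/
theorem sswm_onemax_global_drift_bounds (n : ℕ) (hn : 2 ≤ n) (β : ℝ) (hβ : 0 < β)
    (N : ℕ) (hN : 0 < N) (i : ℕ) (hi : i ≤ n - 1) :
    (((n : ℝ) - i) / n) * (1 - 1 / n) ^ (n - 1) * pfix β N 1 ≤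
        (∑ j ∈ Finset.Icc 1 (n - i), mutProb n i (i + j) * (j : ℝ) * pfix β N (j : ℝ)) ∧
    (∑ j ∈ Finset.Icc 1 i, mutProb n i (i - j) * (j : ℝ) * pfix β N (-(j : ℝ))) ≤
        1.14 * (1 - 1 / n) ^ (n - 1) * (pfix β N (-1) + Real.exp 1 * pfix β N (-2)) :=
  sswm_onemax_global_drift_bounds_general n hn β hβ N i hi
end
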